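/- Under the continuity assumption on r and P^0, any N-agent policy tuple performs asymptotically as well as its averaged policy: lim_{N→∞} sup_{(π^1,…,π^N) ∈ Π_N^N} |J^N(π^1,…,π^N) − J^N(π^N(π̂))| = 0, where π̂ ∈ Π is the average policy defined by π̂_t(x^0)(x)(u) = (1/N) ∑_{i=1}^N π^i_t(x^0, x)(u) and π^N(π̂) is the N-tuple in which every agent uses π̂. -/

import Mathlib

/-!
For fixed decision rules `d¹, …, d^{N+1}` the empirical state-action distribution `𝔾^N` has
mean `G(μ0, ĥ)`, where `ĥ` is the average rule, and each of its coordinates is an average of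
`N + 1` independent indicators, so `E[dist(𝔾^N, G(μ0, ĥ))²] = O(1/N)` uniformly in the rules.
By uniform continuity on the compact simplex, `E[f(𝔾^N)]` is then uniformly close to
`f(G(μ0, ĥ))` for every continuous `f`; since this limit is the same for the tuple and for
`N + 1` copies of `ĥ`, the two systems have per-step rewards and transition kernels within `δ`
of each other once `N` is large. The laws of the environment state then drift apart by at most
`t · |X⁰| · δ` in `ℓ¹` at time `t`, and the discounted sum of the resulting errors is
`O(δ / (1 - γ)²)`.
-/

open Finset Filter Topology

section MFC

variable {X U X0 : Type*} [Fintype X] [Fintype U] [Fintype X0]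

/-- The state-action distribution `G(μ,h)(x,u) = h(x)(u)·μ(x)` induced by a state
distribution `μ` and a decision rule `h ∈ 𝓗 = {h : X → 𝒫(U)}`. -/
noncomputable def jointG (μ : ↥(stdSimplex ℝ X)) (h : X → ↥(stdSimplex ℝ U)) :
    ↥(stdSimplex ℝ (X × U)) :=
  ⟨fun p => (h p.1).1 p.2 * μ.1 p.1,
   ⟨fun p => mul_nonneg ((h p.1).2.1 p.2) (μ.2.1 p.1), by
    calc ∑ p : X × U, (h p.1).1 p.2 * μ.1 p.1
        = ∑ x : X, ∑ u : U, (h x).1 u * μ.1 x := by rw [Fintype.sum_prod_type]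
      _ = ∑ x : X, (∑ u : U, (h x).1 u) * μ.1 x := by
          simp [Finset.sum_mul]
      _ = 1 := by
          simp only [fun x : X => (h x).2.2, one_mul]
          exact μ.2.2⟩⟩

/-- The (deterministic) empirical state-action distribution of the `N+1` sampled
state-action pairs `s i ∈ X × U`. -/
noncomputable def empDist [DecidableEq X] [DecidableEq U] (N : ℕ) (s : Fin (N + 1) → X × U) :
    ↥(stdSimplex ℝ (X × U)) :=
  ⟨fun p => (∑ i, if s i = p then (1 : ℝ) else 0) / (N + 1),
   ⟨fun p => div_nonneg (Finset.sum_nonneg fun i _ => by positivity) (by positivity), by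
    rw [← Finset.sum_div, Finset.sum_comm]
    simp only [Finset.sum_ite_eq, Finset.mem_univ, if_true, Finset.sum_const,
      Finset.card_univ, Fintype.card_fin, nsmul_eq_mul, mul_one]
    rw [Nat.cast_add, Nat.cast_one, div_self (by positivity)]⟩⟩

/-- The probability that the `N+1` agents, with states drawn i.i.d. from `μ0` and actions
drawn conditionally independently from the decision rules `d i`, sample exactly the
state-action pairs `s i`. -/
noncomputable def sampleWeight (N : ℕ) (μ0 : ↥(stdSimplex ℝ X))
    (d : Fin (N + 1) → X → ↥(stdSimplex ℝ U)) (s : Fin (N + 1) → X × U) : ℝ :=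
  ∏ i, μ0.1 (s i).1 * (d i (s i).1).1 (s i).2

/-- The expectation `E[f(𝔾^N)]` of a function `f` of the random empirical state-action
distribution `𝔾^N ~ 𝒢^N(μ0, (d¹,…,d^{N+1}))`. -/
noncomputable def empExp [DecidableEq X] [DecidableEq U] (N : ℕ) (μ0 : ↥(stdSimplex ℝ X))
    (d : Fin (N + 1) → X → ↥(stdSimplex ℝ U))
    (f : ↥(stdSimplex ℝ (X × U)) → ℝ) : ℝ :=
  ∑ s : Fin (N + 1) → X × U, sampleWeight N μ0 d s * f (empDist N s)

/-- The law of the environment state `x^{0,N}_t` of the `(N+1)`-agent system under the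
policy tuple `πv`, with agent states resampled i.i.d. from `μ0` at every step. -/
noncomputable def envLawN [DecidableEq X] [DecidableEq U] (N : ℕ) (μ0 : ↥(stdSimplex ℝ X))
    (μ00 : ↥(stdSimplex ℝ X0))
    (P0 : X0 → ↥(stdSimplex ℝ (X × U)) → ↥(stdSimplex ℝ X0))
    (πv : Fin (N + 1) → ℕ → X0 → X → ↥(stdSimplex ℝ U)) : ℕ → X0 → ℝ
  | 0 => fun y => μ00.1 y
  | t + 1 => fun y => ∑ x0 : X0, envLawN N μ0 μ00 P0 πv t x0 *
      empExp N μ0 (fun i => πv i t x0) (fun G => (P0 x0 G).1 y)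

/-- The `(N+1)`-agent objective `J^N(π¹,…,π^{N+1}) = E[∑ₜ γᵗ r(x^{0,N}_t, 𝔾^N_t)]`. -/
noncomputable def JN [DecidableEq X] [DecidableEq U] (N : ℕ) (μ0 : ↥(stdSimplex ℝ X))
    (μ00 : ↥(stdSimplex ℝ X0))
    (P0 : X0 → ↥(stdSimplex ℝ (X × U)) → ↥(stdSimplex ℝ X0))
    (r : X0 → ↥(stdSimplex ℝ (X × U)) → ℝ) (γ : ℝ)
    (πv : Fin (N + 1) → ℕ → X0 → X → ↥(stdSimplex ℝ U)) : ℝ :=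
  ∑' t : ℕ, γ ^ t * ∑ x0 : X0, envLawN N μ0 μ00 P0 πv t x0 *
      empExp N μ0 (fun i => πv i t x0) (fun G => r x0 G)

/-- The law of the mean-field environment state `x^0_t` under the mean-field policy `π`. -/
noncomputable def envLawMF (μ0 : ↥(stdSimplex ℝ X)) (μ00 : ↥(stdSimplex ℝ X0))
    (P0 : X0 → ↥(stdSimplex ℝ (X × U)) → ↥(stdSimplex ℝ X0))
    (π : ℕ → X0 → X → ↥(stdSimplex ℝ U)) : ℕ → X0 → ℝ
  | 0 => fun y => μ00.1 y
  | t + 1 => fun y => ∑ x0 : X0, envLawMF μ0 μ00 P0 π t x0 *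
      (P0 x0 (jointG μ0 (π t x0))).1 y

/-- The mean-field objective `J(π) = E[∑ₜ γᵗ r(x^0_t, G(μ0, π_t(x^0_t)))]`. -/
noncomputable def JMF (μ0 : ↥(stdSimplex ℝ X)) (μ00 : ↥(stdSimplex ℝ X0))
    (P0 : X0 → ↥(stdSimplex ℝ (X × U)) → ↥(stdSimplex ℝ X0))
    (r : X0 → ↥(stdSimplex ℝ (X × U)) → ℝ) (γ : ℝ)
    (π : ℕ → X0 → X → ↥(stdSimplex ℝ U)) : ℝ :=
  ∑' t : ℕ, γ ^ t * ∑ x0 : X0, envLawMF μ0 μ00 P0 π t x0 * r x0 (jointG μ0 (π t x0))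

end MFC

/-- The average `ĥ` of `N+1` probability distributions on `U`. -/
noncomputable def avgDist {U : Type*} [Fintype U] (N : ℕ)
    (d : Fin (N + 1) → ↥(stdSimplex ℝ U)) : ↥(stdSimplex ℝ U) :=
  ⟨fun u => (∑ i, (d i).1 u) / (N + 1),
   ⟨fun u => div_nonneg (Finset.sum_nonneg fun i _ => (d i).2.1 u) (by positivity), by
     rw [← Finset.sum_div, Finset.sum_comm]
     simp only [fun i : Fin (N + 1) => (d i).2.2]
     simp only [Finset.sum_const, Finset.card_univ, Fintype.card_fin, nsmul_eq_mul,
       mul_one]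
     rw [Nat.cast_add, Nat.cast_one, div_self (by positivity)]⟩⟩

section ProductWeights

variable {ι α : Type*} [Fintype ι] [DecidableEq ι] [Fintype α]

theorem sum_prod_mul_prod {R : Type*} [CommSemiring R] (w g : ι → α → R) :
    ∑ s : ι → α, (∏ i, w i (s i)) * ∏ i, g i (s i) = ∏ i, ∑ a, w i a * g i a := by
  rw [Fintype.prod_sum]
  simp only [Finset.prod_mul_distrib]

variable (q : ι → ↥(stdSimplex ℝ α))

theorem sum_prod_eq_one : ∑ s : ι → α, ∏ i, (q i).1 (s i) = 1 := by
  simpa [(q _).2.2] using sum_prod_mul_prod (fun i => (q i).1) fun _ _ => 1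

theorem sum_prod_mul_prod_finset (T : Finset ι) (g : ι → α → ℝ) :
    ∑ s : ι → α, (∏ i, (q i).1 (s i)) * ∏ i ∈ T, g i (s i)
      = ∏ i ∈ T, ∑ a, (q i).1 a * g i a := by
  have h := sum_prod_mul_prod (fun i => (q i).1) fun i a => if i ∈ T then g i a else 1
  simp only [Fintype.prod_ite_mem, mul_ite, mul_one] at h
  rw [h, ← Fintype.prod_ite_mem T]
  refine Finset.prod_congr rfl fun i _ => ?_
  split_ifs <;> simp [(q i).2.2]

theorem sum_prod_mul_apply (i : ι) (F : α → ℝ) :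
    ∑ s : ι → α, (∏ k, (q k).1 (s k)) * F (s i) = ∑ a, (q i).1 a * F a := by
  simpa using sum_prod_mul_prod_finset q {i} fun _ => F

theorem sum_prod_mul_apply_mul_apply {i j : ι} (hij : i ≠ j) (F G : α → ℝ) :
    ∑ s : ι → α, (∏ k, (q k).1 (s k)) * (F (s i) * G (s j))
      = (∑ a, (q i).1 a * F a) * ∑ a, (q j).1 a * G a := by
  simpa [Finset.prod_pair hij, hij.symm] using
    sum_prod_mul_prod_finset q {i, j} fun k => if k = i then F else G

theorem sum_prod_mul_sq_sum_le (F : ι → α → ℝ) (hF : ∀ i, ∑ a, (q i).1 a * F i a = 0)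
    (hF1 : ∀ i a, |F i a| ≤ 1) :
    ∑ s : ι → α, (∏ i, (q i).1 (s i)) * (∑ i, F i (s i)) ^ 2 ≤ Fintype.card ι := by
  have hdiag : ∀ i, ∑ s : ι → α, (∏ k, (q k).1 (s k)) * (F i (s i) * F i (s i)) ≤ 1 := by
    intro i
    rw [sum_prod_mul_apply q i fun a => F i a * F i a, ← (q i).2.2]
    refine Finset.sum_le_sum fun a _ => mul_le_of_le_one_right ((q i).2.1 a) ?_
    simpa [← sq, sq_le_one_iff_abs_le_one] using hF1 i a
  calc ∑ s : ι → α, (∏ i, (q i).1 (s i)) * (∑ i, F i (s i)) ^ 2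
      = ∑ i, ∑ j, ∑ s : ι → α, (∏ k, (q k).1 (s k)) * (F i (s i) * F j (s j)) := by
        simp only [sq, Finset.sum_mul_sum]
        simp only [Finset.mul_sum]
        rw [Finset.sum_comm]
        exact Finset.sum_congr rfl fun i _ => Finset.sum_comm
    _ = ∑ i, ∑ s : ι → α, (∏ k, (q k).1 (s k)) * (F i (s i) * F i (s i)) := by
        refine Finset.sum_congr rfl fun i _ => Finset.sum_eq_single i (fun j _ hji => ?_) (by simp)
        rw [sum_prod_mul_apply_mul_apply q hji.symm, hF, zero_mul]
    _ ≤ ∑ _i : ι, (1 : ℝ) := Finset.sum_le_sum fun i _ => hdiag i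
    _ = Fintype.card ι := by simp

end ProductWeights

theorem avgDist_const {V : Type*} [Fintype V] (N : ℕ) (h : ↥(stdSimplex ℝ V)) :
    avgDist N (fun _ => h) = h := by
  apply Subtype.ext
  funext u
  simp only [avgDist, Finset.sum_const, Finset.card_univ, Fintype.card_fin, nsmul_eq_mul]
  rw [Nat.cast_add, Nat.cast_one]
  field_simp

theorem dist_sq_le_sum_sq {α : Type*} [Fintype α] (f g : α → ℝ) :
    dist f g ^ 2 ≤ ∑ a, (f a - g a) ^ 2 := by
  have hsum : 0 ≤ ∑ a, (f a - g a) ^ 2 := Finset.sum_nonneg fun a _ => sq_nonneg _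
  refine (Real.le_sqrt dist_nonneg hsum).1 ((dist_pi_le_iff (Real.sqrt_nonneg _)).2 fun a => ?_)
  rw [Real.dist_eq]
  exact Real.abs_le_sqrt (Finset.single_le_sum (fun b _ => sq_nonneg (f b - g b))
    (Finset.mem_univ a))

theorem abs_sub_le_add_mul_dist_sq {M : Type*} [PseudoMetricSpace M] {f : M → ℝ}
    {C ε δ : ℝ} (hC : ∀ x, |f x| ≤ C) (hε : 0 ≤ ε) (hδ : 0 < δ) {x y : M}
    (h : dist x y < δ → |f x - f y| ≤ ε) :
    |f x - f y| ≤ ε + 2 * C / δ ^ 2 * dist x y ^ 2 := by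
  have hC0 : 0 ≤ C := (abs_nonneg _).trans (hC x)
  by_cases hxy : dist x y < δ
  · have : 0 ≤ 2 * C / δ ^ 2 * dist x y ^ 2 := by positivity
    linarith [h hxy]
  · calc |f x - f y| ≤ 2 * C := (abs_sub _ _).trans (by linarith [hC x, hC y])
      _ = 2 * C / δ ^ 2 * δ ^ 2 := by field_simp
      _ ≤ 2 * C / δ ^ 2 * dist x y ^ 2 := by gcongr; exact not_lt.1 hxy
      _ ≤ ε + 2 * C / δ ^ 2 * dist x y ^ 2 := le_add_of_nonneg_left hε

section Empirical

variable {X U : Type*} [Fintype X] [Fintype U] {N : ℕ} {μ0 : ↥(stdSimplex ℝ X)} {d : Fin (N + 1) → X → ↥(stdSimplex ℝ U)}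

theorem sampleWeight_eq_prod_jointG (s : Fin (N + 1) → X × U) :
    sampleWeight N μ0 d s = ∏ i, (jointG μ0 (d i)).1 (s i) :=
  Finset.prod_congr rfl fun _ _ => mul_comm _ _

theorem sampleWeight_nonneg (s : Fin (N + 1) → X × U) : 0 ≤ sampleWeight N μ0 d s := by
  rw [sampleWeight_eq_prod_jointG]
  exact Finset.prod_nonneg fun i _ => (jointG μ0 (d i)).2.1 _

theorem sum_sampleWeight : ∑ s, sampleWeight N μ0 d s = 1 := by
  simp only [sampleWeight_eq_prod_jointG]
  exact sum_prod_eq_one _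

theorem jointG_avgDist_apply (p : X × U) :
    (jointG μ0 fun x => avgDist N fun i => d i x).1 p
      = (∑ i, (jointG μ0 (d i)).1 p) / (N + 1) := by
  simp only [jointG, avgDist]
  rw [div_mul_eq_mul_div, Finset.sum_mul]

variable [DecidableEq X] [DecidableEq U]

theorem empExp_nonneg {f : ↥(stdSimplex ℝ (X × U)) → ℝ} (hf : ∀ G, 0 ≤ f G) :
    0 ≤ empExp N μ0 d f :=
  Finset.sum_nonneg fun _ _ => mul_nonneg (sampleWeight_nonneg _) (hf _)

theorem abs_empExp_le {f : ↥(stdSimplex ℝ (X × U)) → ℝ} {R : ℝ} (hf : ∀ G, |f G| ≤ R) :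
    |empExp N μ0 d f| ≤ R :=
  calc |empExp N μ0 d f|
      ≤ ∑ s, |sampleWeight N μ0 d s * f (empDist N s)| := Finset.abs_sum_le_sum_abs _ _
    _ ≤ ∑ s, sampleWeight N μ0 d s * R := by
        refine Finset.sum_le_sum fun s _ => ?_
        rw [abs_mul, abs_of_nonneg (sampleWeight_nonneg s)]
        exact mul_le_mul_of_nonneg_left (hf _) (sampleWeight_nonneg s)
    _ = R := by rw [← Finset.sum_mul, sum_sampleWeight, one_mul]

theorem sum_empExp_apply_eq_one {Y : Type*} [Fintype Y]
    (F : ↥(stdSimplex ℝ (X × U)) → ↥(stdSimplex ℝ Y)) :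
    ∑ y, empExp N μ0 d (fun G => (F G).1 y) = 1 := by
  simp only [empExp]
  rw [Finset.sum_comm]
  simp only [← Finset.mul_sum, (F _).2.2, mul_one, sum_sampleWeight]

theorem sum_sampleWeight_mul_sq_empDist_sub_le (p : X × U) :
    ∑ s, sampleWeight N μ0 d s *
        ((empDist N s).1 p - (jointG μ0 fun x => avgDist N fun i => d i x).1 p) ^ 2
      ≤ 1 / (N + 1) := by
  set F : Fin (N + 1) → X × U → ℝ := fun i a => (if a = p then 1 else 0) - (jointG μ0 (d i)).1 p
  have hF : ∀ i, ∑ a, (jointG μ0 (d i)).1 a * F i a = 0 := fun i => by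
    simp [F, mul_sub, Finset.sum_sub_distrib, ← Finset.sum_mul, (jointG μ0 (d i)).2.2]
  have hF1 : ∀ i a, |F i a| ≤ 1 := fun i a => by
    have h0 := (jointG μ0 (d i)).2.1 p
    have h1 : (jointG μ0 (d i)).1 p ≤ 1 := stdSimplex.le_one _ p
    rw [abs_le]
    constructor <;> by_cases h : a = p <;> simp [F, h] <;> linarith
  have hdev : ∀ s : Fin (N + 1) → X × U,
      (empDist N s).1 p - (jointG μ0 fun x => avgDist N fun i => d i x).1 p
        = (∑ i, F i (s i)) / (N + 1) := fun s => by
    rw [jointG_avgDist_apply]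
    simp only [empDist, F, Finset.sum_sub_distrib, sub_div]
  calc ∑ s, sampleWeight N μ0 d s *
          ((empDist N s).1 p - (jointG μ0 fun x => avgDist N fun i => d i x).1 p) ^ 2
      = (∑ s : Fin (N + 1) → X × U, (∏ i, (jointG μ0 (d i)).1 (s i)) * (∑ i, F i (s i)) ^ 2)
          / (N + 1) ^ 2 := by
        rw [Finset.sum_div]
        refine Finset.sum_congr rfl fun s _ => ?_
        rw [sampleWeight_eq_prod_jointG, hdev, div_pow, mul_div_assoc]
    _ ≤ (N + 1) / (N + 1) ^ 2 := by
        gcongr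
        simpa using sum_prod_mul_sq_sum_le (fun i => jointG μ0 (d i)) F hF hF1
    _ = 1 / (N + 1) := by field_simp

theorem sum_sampleWeight_mul_dist_sq_le :
    ∑ s, sampleWeight N μ0 d s *
        dist (empDist N s) (jointG μ0 fun x => avgDist N fun i => d i x) ^ 2
      ≤ Fintype.card (X × U) / (N + 1) := by
  set m := jointG μ0 fun x => avgDist N fun i => d i x
  calc ∑ s, sampleWeight N μ0 d s * dist (empDist N s) m ^ 2
      ≤ ∑ s, sampleWeight N μ0 d s * ∑ p, ((empDist N s).1 p - m.1 p) ^ 2 := by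
        gcongr with s
        · exact sampleWeight_nonneg s
        · exact dist_sq_le_sum_sq _ _
    _ = ∑ p, ∑ s, sampleWeight N μ0 d s * ((empDist N s).1 p - m.1 p) ^ 2 := by
        simp only [Finset.mul_sum]
        exact Finset.sum_comm
    _ ≤ ∑ _p : X × U, 1 / ((N : ℝ) + 1) :=
        Finset.sum_le_sum fun p _ => sum_sampleWeight_mul_sq_empDist_sub_le p
    _ = Fintype.card (X × U) / (N + 1) := by simp [div_eq_mul_inv]

end Empirical

section LawOfLargeNumbers

variable {X U : Type*} [Fintype X] [Fintype U] [DecidableEq X] [DecidableEq U]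
  {f : ↥(stdSimplex ℝ (X × U)) → ℝ}

theorem eventually_abs_empExp_sub_le (hf : Continuous f) {ε : ℝ} (hε : 0 < ε) :
    ∀ᶠ N in atTop, ∀ (μ0 : ↥(stdSimplex ℝ X)) (d : Fin (N + 1) → X → ↥(stdSimplex ℝ U)),
      |empExp N μ0 d f - f (jointG μ0 fun x => avgDist N fun i => d i x)| ≤ ε := by
  obtain ⟨C, hC⟩ := isCompact_univ.exists_bound_of_continuousOn hf.continuousOn
  have hC' : ∀ G, |f G| ≤ C := fun G => hC G trivial
  obtain ⟨δ, hδ, hfδ⟩ := Metric.uniformContinuous_iff.1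
    (CompactSpace.uniformContinuous_of_continuous hf) (ε / 2) (half_pos hε)
  have hsmall : ∀ᶠ N : ℕ in atTop,
      2 * C / δ ^ 2 * (Fintype.card (X × U) * (1 / ((N : ℝ) + 1))) < ε / 2 := by
    have h := (tendsto_one_div_add_atTop_nhds_zero_nat.const_mul
      (Fintype.card (X × U) : ℝ)).const_mul (2 * C / δ ^ 2)
    rw [mul_zero, mul_zero] at h
    exact h.eventually (gt_mem_nhds (half_pos hε))
  filter_upwards [hsmall] with N hN μ0 d
  set m := jointG μ0 fun x => avgDist N fun i => d i x
  have hC0 : 0 ≤ C := (abs_nonneg _).trans (hC' m)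
  have hpt : ∀ G, |f G - f m| ≤ ε / 2 + 2 * C / δ ^ 2 * dist G m ^ 2 := fun G =>
    abs_sub_le_add_mul_dist_sq hC' (half_pos hε).le hδ fun h => (hfδ h).le
  calc |empExp N μ0 d f - f m|
      = |∑ s, sampleWeight N μ0 d s * (f (empDist N s) - f m)| := by
        simp only [empExp, mul_sub, Finset.sum_sub_distrib, ← Finset.sum_mul, sum_sampleWeight,
          one_mul]
    _ ≤ ∑ s, sampleWeight N μ0 d s * |f (empDist N s) - f m| := by
        refine (Finset.abs_sum_le_sum_abs _ _).trans_eq (Finset.sum_congr rfl fun s _ => ?_)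
        rw [abs_mul, abs_of_nonneg (sampleWeight_nonneg s)]
    _ ≤ ∑ s, sampleWeight N μ0 d s * (ε / 2 + 2 * C / δ ^ 2 * dist (empDist N s) m ^ 2) := by
        gcongr with s
        · exact sampleWeight_nonneg s
        · exact hpt _
    _ = ε / 2 + 2 * C / δ ^ 2 * ∑ s, sampleWeight N μ0 d s * dist (empDist N s) m ^ 2 := by
        simp only [mul_add, Finset.sum_add_distrib, ← Finset.sum_mul, sum_sampleWeight, one_mul,
          Finset.mul_sum, mul_left_comm]
    _ ≤ ε / 2 + 2 * C / δ ^ 2 * (Fintype.card (X × U) / (N + 1)) := by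
        gcongr
        exact sum_sampleWeight_mul_dist_sq_le
    _ ≤ ε := by rw [div_eq_mul_one_div (Fintype.card (X × U) : ℝ)]; linarith

theorem eventually_abs_empExp_sub_empExp_avgDist_le (hf : Continuous f) {ε : ℝ} (hε : 0 < ε) :
    ∀ᶠ N in atTop, ∀ (μ0 : ↥(stdSimplex ℝ X)) (d : Fin (N + 1) → X → ↥(stdSimplex ℝ U)),
      |empExp N μ0 d f - empExp N μ0 (fun _ x => avgDist N fun i => d i x) f| ≤ ε := by
  filter_upwards [eventually_abs_empExp_sub_le hf (half_pos hε)] with N hN μ0 d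
  have havg := hN μ0 fun _ x => avgDist N fun i => d i x
  simp only [avgDist_const] at havg
  calc |empExp N μ0 d f - empExp N μ0 (fun _ x => avgDist N fun i => d i x) f|
      ≤ |empExp N μ0 d f - f (jointG μ0 fun x => avgDist N fun i => d i x)|
        + |f (jointG μ0 fun x => avgDist N fun i => d i x)
          - empExp N μ0 (fun _ x => avgDist N fun i => d i x) f| := abs_sub_le _ _ _
    _ ≤ ε / 2 + ε / 2 := add_le_add (hN μ0 d) (by rwa [abs_sub_comm])
    _ = ε := add_halves ε

end LawOfLargeNumbers

section StochasticSums

variable {S T : Type*} [Fintype S] [Fintype T]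

theorem abs_sum_mul_sub_sum_mul_le (ν ν' a b : S → ℝ) (hν' : ∀ x, 0 ≤ ν' x) :
    |∑ x, ν x * a x - ∑ x, ν' x * b x|
      ≤ ∑ x, |ν x - ν' x| * |a x| + ∑ x, ν' x * |a x - b x| :=
  calc |∑ x, ν x * a x - ∑ x, ν' x * b x|
      = |∑ x, ((ν x - ν' x) * a x + ν' x * (a x - b x))| := by
        rw [← Finset.sum_sub_distrib]
        exact congrArg _ (Finset.sum_congr rfl fun x _ => by ring)
    _ ≤ ∑ x, (|ν x - ν' x| * |a x| + ν' x * |a x - b x|) := by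
        refine (Finset.abs_sum_le_sum_abs _ _).trans (Finset.sum_le_sum fun x _ => ?_)
        refine (abs_add_le _ _).trans_eq ?_
        rw [abs_mul, abs_mul, abs_of_nonneg (hν' x)]
    _ = _ := Finset.sum_add_distrib

theorem abs_sum_mul_le_of_abs_le {ν a : S → ℝ} {R : ℝ} (hν : ∀ x, 0 ≤ ν x)
    (hν1 : ∑ x, ν x = 1) (ha : ∀ x, |a x| ≤ R) : |∑ x, ν x * a x| ≤ R :=
  calc |∑ x, ν x * a x| ≤ ∑ x, ν x * R := by
        refine (Finset.abs_sum_le_sum_abs _ _).trans (Finset.sum_le_sum fun x _ => ?_)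
        rw [abs_mul, abs_of_nonneg (hν x)]
        exact mul_le_mul_of_nonneg_left (ha x) (hν x)
    _ = R := by rw [← Finset.sum_mul, hν1, one_mul]

theorem abs_sum_mul_sub_sum_mul_le_of_abs_le {ν ν' a b : S → ℝ} {R δ : ℝ}
    (hν' : ∀ x, 0 ≤ ν' x) (hν'1 : ∑ x, ν' x = 1) (ha : ∀ x, |a x| ≤ R)
    (hab : ∀ x, |a x - b x| ≤ δ) :
    |∑ x, ν x * a x - ∑ x, ν' x * b x| ≤ R * ∑ x, |ν x - ν' x| + δ := by
  refine (abs_sum_mul_sub_sum_mul_le ν ν' a b hν').trans (add_le_add ?_ ?_)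
  · rw [Finset.mul_sum]
    exact Finset.sum_le_sum fun x _ => by
      rw [mul_comm R]; exact mul_le_mul_of_nonneg_left (ha x) (abs_nonneg _)
  · calc ∑ x, ν' x * |a x - b x| ≤ ∑ x, ν' x * δ :=
          Finset.sum_le_sum fun x _ => mul_le_mul_of_nonneg_left (hab x) (hν' x)
      _ = δ := by rw [← Finset.sum_mul, hν'1, one_mul]

theorem sum_abs_sum_mul_sub_sum_mul_le {ν ν' : S → ℝ} {Q Q' : S → T → ℝ} {δ : ℝ}
    (hν' : ∀ x, 0 ≤ ν' x) (hν'1 : ∑ x, ν' x = 1) (hQ : ∀ x y, 0 ≤ Q x y)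
    (hQ1 : ∀ x, ∑ y, Q x y = 1) (hQQ' : ∀ x y, |Q x y - Q' x y| ≤ δ) :
    ∑ y, |∑ x, ν x * Q x y - ∑ x, ν' x * Q' x y|
      ≤ ∑ x, |ν x - ν' x| + Fintype.card T * δ :=
  calc ∑ y, |∑ x, ν x * Q x y - ∑ x, ν' x * Q' x y|
      ≤ ∑ y, (∑ x, |ν x - ν' x| * |Q x y| + ∑ x, ν' x * |Q x y - Q' x y|) :=
        Finset.sum_le_sum fun y _ => abs_sum_mul_sub_sum_mul_le _ _ _ _ hν'
    _ = ∑ x, |ν x - ν' x| * ∑ y, Q x y + ∑ x, ν' x * ∑ y, |Q x y - Q' x y| := by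
        simp only [Finset.sum_add_distrib, Finset.mul_sum, abs_of_nonneg (hQ _ _)]
        rw [Finset.sum_comm, Finset.sum_comm (γ := T)]
    _ ≤ ∑ x, |ν x - ν' x| * 1 + ∑ x, ν' x * ∑ _y : T, δ := by
        gcongr with x _ x _ y
        · exact (hQ1 x).le
        · exact hν' x
        · exact hQQ' x y
    _ = ∑ x, |ν x - ν' x| + Fintype.card T * δ := by
        simp [← Finset.sum_mul, hν'1]

end StochasticSums

theorem abs_tsum_geometric_mul_sub_le {γ : ℝ} (hγ0 : 0 ≤ γ) (hγ1 : γ < 1) {a b : ℕ → ℝ}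
    {R c : ℝ} (ha : ∀ t, |a t| ≤ R) (hb : ∀ t, |b t| ≤ R)
    (hab : ∀ t, |a t - b t| ≤ c * (t + 1)) :
    |∑' t, γ ^ t * a t - ∑' t, γ ^ t * b t| ≤ c / (1 - γ) ^ 2 := by
  have hsummable : ∀ {e : ℕ → ℝ}, (∀ t, |e t| ≤ R) → Summable fun t => γ ^ t * e t :=
    fun he => ((summable_geometric_of_lt_one hγ0 hγ1).mul_right R).of_norm_bounded fun t => by
      rw [Real.norm_eq_abs, abs_mul, abs_of_nonneg (pow_nonneg hγ0 t)]
      exact mul_le_mul_of_nonneg_left (he t) (pow_nonneg hγ0 t)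
  have hS : HasSum (fun t : ℕ => c * (((t : ℝ) + 1) * γ ^ t)) (c * (1 / (1 - γ) ^ 2)) := by
    have h := hasSum_choose_mul_geometric_of_norm_lt_one 1
      (by rwa [Real.norm_eq_abs, abs_of_nonneg hγ0] : ‖γ‖ < 1)
    simp only [Nat.choose_one_right, Nat.cast_add, Nat.cast_one] at h
    exact h.mul_left c
  rw [← (hsummable ha).tsum_sub (hsummable hb), ← Real.norm_eq_abs]
  refine (tsum_of_norm_bounded hS fun t => ?_).trans_eq (mul_one_div c _)
  rw [← mul_sub, Real.norm_eq_abs, abs_mul, abs_of_nonneg (pow_nonneg hγ0 t)]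
  calc γ ^ t * |a t - b t| ≤ γ ^ t * (c * (t + 1)) :=
        mul_le_mul_of_nonneg_left (hab t) (pow_nonneg hγ0 t)
    _ = c * (((t : ℝ) + 1) * γ ^ t) := by ring

section NAgentObjective

variable {X U X0 : Type*} [Fintype X] [Fintype U] [Fintype X0] [DecidableEq X] [DecidableEq U]
  (N : ℕ) (μ0 : ↥(stdSimplex ℝ X)) (μ00 : ↥(stdSimplex ℝ X0))
  (P0 : X0 → ↥(stdSimplex ℝ (X × U)) → ↥(stdSimplex ℝ X0))

theorem envLawN_nonneg (πv : Fin (N + 1) → ℕ → X0 → X → ↥(stdSimplex ℝ U)) (t : ℕ) (x0 : X0) :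
    0 ≤ envLawN N μ0 μ00 P0 πv t x0 := by
  induction t generalizing x0 with
  | zero => exact μ00.2.1 x0
  | succ t ih =>
    exact Finset.sum_nonneg fun y _ => mul_nonneg (ih y) (empExp_nonneg fun G => (P0 y G).2.1 x0)

theorem sum_envLawN (πv : Fin (N + 1) → ℕ → X0 → X → ↥(stdSimplex ℝ U)) (t : ℕ) :
    ∑ x0, envLawN N μ0 μ00 P0 πv t x0 = 1 := by
  induction t with
  | zero => exact μ00.2.2
  | succ t ih =>
    simp only [envLawN]
    rw [Finset.sum_comm]
    simp only [← Finset.mul_sum, sum_empExp_apply_eq_one, mul_one, ih]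

theorem sum_abs_envLawN_sub_le (πv πw : Fin (N + 1) → ℕ → X0 → X → ↥(stdSimplex ℝ U)) {δ : ℝ}
    (hP : ∀ t x0 y, |empExp N μ0 (fun i => πv i t x0) (fun G => (P0 x0 G).1 y)
      - empExp N μ0 (fun i => πw i t x0) (fun G => (P0 x0 G).1 y)| ≤ δ) (t : ℕ) :
    ∑ x0, |envLawN N μ0 μ00 P0 πv t x0 - envLawN N μ0 μ00 P0 πw t x0|
      ≤ t * (Fintype.card X0 * δ) := by
  induction t with
  | zero => simp [envLawN]
  | succ t ih =>
    refine (sum_abs_sum_mul_sub_sum_mul_le (envLawN_nonneg N μ0 μ00 P0 πw t)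
      (sum_envLawN N μ0 μ00 P0 πw t) (fun x0 y => empExp_nonneg fun G => (P0 x0 G).2.1 y)
      (fun x0 => sum_empExp_apply_eq_one (P0 x0)) (hP t)).trans ?_
    push_cast
    linarith

theorem abs_JN_sub_JN_le (r : X0 → ↥(stdSimplex ℝ (X × U)) → ℝ) {γ R δ : ℝ} (hγ0 : 0 ≤ γ)
    (hγ1 : γ < 1) (hR0 : 0 ≤ R) (hR : ∀ x0 G, |r x0 G| ≤ R) (hδ : 0 ≤ δ)
    (πv πw : Fin (N + 1) → ℕ → X0 → X → ↥(stdSimplex ℝ U))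
    (hr : ∀ t x0, |empExp N μ0 (fun i => πv i t x0) (r x0)
      - empExp N μ0 (fun i => πw i t x0) (r x0)| ≤ δ)
    (hP : ∀ t x0 y, |empExp N μ0 (fun i => πv i t x0) (fun G => (P0 x0 G).1 y)
      - empExp N μ0 (fun i => πw i t x0) (fun G => (P0 x0 G).1 y)| ≤ δ) :
    |JN N μ0 μ00 P0 r γ πv - JN N μ0 μ00 P0 r γ πw|
      ≤ (R * Fintype.card X0 + 1) * δ / (1 - γ) ^ 2 := by
  have hbound : ∀ (π : Fin (N + 1) → ℕ → X0 → X → ↥(stdSimplex ℝ U)) t,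
      |∑ x0, envLawN N μ0 μ00 P0 π t x0 * empExp N μ0 (fun i => π i t x0) (r x0)| ≤ R :=
    fun π t => abs_sum_mul_le_of_abs_le (envLawN_nonneg N μ0 μ00 P0 π t)
      (sum_envLawN N μ0 μ00 P0 π t) fun x0 => abs_empExp_le (hR x0)
  refine abs_tsum_geometric_mul_sub_le hγ0 hγ1 (hbound πv) (hbound πw) fun t => ?_
  refine (abs_sum_mul_sub_sum_mul_le_of_abs_le (envLawN_nonneg N μ0 μ00 P0 πw t)
    (sum_envLawN N μ0 μ00 P0 πw t) (fun x0 => abs_empExp_le (hR x0)) (hr t)).trans ?_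
  have hΔ := sum_abs_envLawN_sub_le N μ0 μ00 P0 πv πw hP t
  have hcard : (0 : ℝ) ≤ Fintype.card X0 := Nat.cast_nonneg _
  have ht : (0 : ℝ) ≤ t := Nat.cast_nonneg _
  nlinarith [mul_le_mul_of_nonneg_left hΔ hR0, mul_nonneg (mul_nonneg hR0 hcard) hδ,
    mul_nonneg hδ ht]

end NAgentObjective

theorem tendsto_iSup_abs_nhds_zero {α : Type*} {l : Filter α} {ι : α → Sort*}
    {g : ∀ a, ι a → ℝ} (h : ∀ ε > 0, ∀ᶠ a in l, ∀ i, |g a i| ≤ ε) :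
    Tendsto (fun a => ⨆ i, |g a i|) l (𝓝 0) := by
  refine Metric.tendsto_nhds.2 fun ε hε => ?_
  filter_upwards [h (ε / 2) (half_pos hε)] with a ha
  rw [Real.dist_eq, sub_zero, abs_of_nonneg (Real.iSup_nonneg fun i => abs_nonneg _)]
  exact (Real.iSup_le ha (half_pos hε).le).trans_lt (half_lt_self hε)

theorem exists_forall_abs_le_of_continuous {ι M : Type*} [Finite ι] [TopologicalSpace M]
    [CompactSpace M] {f : ι → M → ℝ} (hf : ∀ i, Continuous (f i)) :
    ∃ R, 0 ≤ R ∧ ∀ i x, |f i x| ≤ R := by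
  choose C hC using fun i => isCompact_univ.exists_bound_of_continuousOn (hf i).continuousOn
  obtain ⟨R, hR⟩ := Finite.exists_le C
  exact ⟨max R 0, le_max_right _ _, fun i x =>
    ((hC i x trivial).trans (hR i)).trans (le_max_left _ _)⟩

theorem policy_tuple_asymptotically_equals_average_policy_general
    {X U X0 : Type*} [Fintype X] [Fintype U] [Fintype X0]
    [DecidableEq X] [DecidableEq U]
    (μ0 : ↥(stdSimplex ℝ X)) (μ00 : ↥(stdSimplex ℝ X0))
    (P0 : X0 → ↥(stdSimplex ℝ (X × U)) → ↥(stdSimplex ℝ X0))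
    (r : X0 → ↥(stdSimplex ℝ (X × U)) → ℝ)
    (γ : ℝ) (hγ : γ ∈ Set.Ioo (0 : ℝ) 1)
    -- Assumption 1: continuity of r and P⁰ in the state-action distribution
    (hr : ∀ x0, Continuous (r x0)) (hP0 : ∀ x0, Continuous (P0 x0)) :
    Tendsto (fun N : ℕ =>
        ⨆ πv : Fin (N + 1) → ℕ → X0 → X → ↥(stdSimplex ℝ U),
          |JN N μ0 μ00 P0 r γ πv -
            JN N μ0 μ00 P0 r γ
              (fun _ t x0 x => avgDist N (fun i => πv i t x0 x))|)
      atTop (𝓝 0) := by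
  obtain ⟨R, hR0, hR⟩ := exists_forall_abs_le_of_continuous hr
  have hPy : ∀ x0 y, Continuous fun G => (P0 x0 G).1 y := fun x0 y =>
    (continuous_apply y).comp (continuous_subtype_val.comp (hP0 x0))
  refine tendsto_iSup_abs_nhds_zero fun ε hε => ?_
  obtain ⟨δ, hδ, hδε⟩ := exists_pos_mul_lt hε ((R * Fintype.card X0 + 1) / (1 - γ) ^ 2)
  filter_upwards [eventually_all.2 fun x0 => eventually_abs_empExp_sub_empExp_avgDist_le (hr x0) hδ,
    eventually_all.2 fun q : X0 × X0 =>
      eventually_abs_empExp_sub_empExp_avgDist_le (hPy q.1 q.2) hδ] with N hNr hNP πv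
  refine (abs_JN_sub_JN_le N μ0 μ00 P0 r hγ.1.le hγ.2 hR0 hR hδ.le πv _
    (fun t x0 => hNr x0 μ0 _) (fun t x0 y => hNP (x0, y) μ0 _)).trans ?_
  rw [mul_div_right_comm]
  exact hδε.le

/-- Under the continuity assumption on `r` and `P⁰`, any `N`-agent policy
tuple performs asymptotically as well as its averaged policy:
`lim_{N→∞} sup_{(π¹,…,πᴺ) ∈ Π_N^N} |J^N(π¹,…,πᴺ) − J^N(π^N(π̂))| = 0`, where `π̂ ∈ Π` is
the average policy `π̂_t(x⁰)(x)(u) = (1/N) ∑ᵢ πⁱ_t(x⁰,x)(u)` and `π^N(π̂)` is the `N`-tuple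
in which every agent uses `π̂`.
(The number of agents is written as `N + 1`; the limit `N → ∞` is unaffected.) -/
theorem policy_tuple_asymptotically_equals_average_policy
    {X U X0 : Type*} [Fintype X] [Fintype U] [Fintype X0]
    [Nonempty X] [Nonempty U] [Nonempty X0] [DecidableEq X] [DecidableEq U]
    (μ0 : ↥(stdSimplex ℝ X)) (μ00 : ↥(stdSimplex ℝ X0))
    (P0 : X0 → ↥(stdSimplex ℝ (X × U)) → ↥(stdSimplex ℝ X0))
    (r : X0 → ↥(stdSimplex ℝ (X × U)) → ℝ)
    (γ : ℝ) (hγ : γ ∈ Set.Ioo (0 : ℝ) 1)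
    -- Assumption 1: continuity of r and P⁰ in the state-action distribution
    (hr : ∀ x0, Continuous (r x0)) (hP0 : ∀ x0, Continuous (P0 x0)) :
    Tendsto (fun N : ℕ =>
        ⨆ πv : Fin (N + 1) → ℕ → X0 → X → ↥(stdSimplex ℝ U),
          |JN N μ0 μ00 P0 r γ πv -
            JN N μ0 μ00 P0 r γ
              (fun _ t x0 x => avgDist N (fun i => πv i t x0 x))|)
      atTop (𝓝 0) :=
  policy_tuple_asymptotically_equals_average_policy_general μ0 μ00 P0 r γ hγ hr hP0
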